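/- arXiv:2307.14290 — 8 statements merged into one kernel-verified Lean document; each statement's English description precedes it below -/
import Mathlib

section
/- Let X be a real random variable and let γ ∈ ℝ \ {0}, δ ∈ ℝ, and set Y = γX + δ. If γ > 0 and (α, β) ∈ D_X, then G_Y(α, β) = γ · G_X(α, β); if γ < 0 and (β, α) ∈ D_X, then G_Y(α, β) = |γ| · G_X(β, α). -/
open MeasureTheory ProbabilityTheory Set

/-- The (essential) support interval of a CDF `F`: the set where `0 < F x < 1`,
which coincides (up to endpoints) with the interval `(l, r)` where
`l = inf {x : F x > 0}` and `r = sup {x : 1 - F x > 0}`. -/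
def cigfSupport (F : ℝ → ℝ) : Set ℝ := {x | 0 < F x ∧ F x < 1}

/-- The cumulative information generating function
`G_X(α, β) = ∫_l^r F(x)^α (1 - F(x))^β dx`. -/
noncomputable def cigf (F : ℝ → ℝ) (α β : ℝ) : ℝ :=
  ∫ x in cigfSupport F, F x ^ α * (1 - F x) ^ β

/-- `(α, β) ∈ D_X`, i.e. `G_X(α, β) < ∞`. -/
def memD (F : ℝ → ℝ) (α β : ℝ) : Prop :=
  IntegrableOn (fun x => F x ^ α * (1 - F x) ^ β) (cigfSupport F)

/-- The CDF of a random variable `X` under the probability measure `P`. -/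
noncomputable def rvCDF {Ω : Type*} [MeasurableSpace Ω] (P : Measure Ω) (X : Ω → ℝ) (x : ℝ) : ℝ :=
  (P {ω | X ω ≤ x}).toReal

/-- The CDF of a probability measure on `ℝ`. -/
noncomputable def cdfOf (μ : Measure ℝ) (x : ℝ) : ℝ := (μ (Iic x)).toReal

/-!
For `γ > 0` the CDF of `Y = γX + δ` is `x ↦ F_X ((x - δ) / γ)`, and the substitution
`t = (x - δ) / γ` in the integral gives the factor `γ`. For `γ < 0` it is
`x ↦ P (X ≥ (x - δ) / γ)`, which agrees with `1 - F_X ((x - δ) / γ)` except at the images of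
the countably many atoms of `X`, a Lebesgue-null set. Exchanging `F` and `1 - F` exchanges `α` and
`β`, and the same substitution gives the factor `|γ|`.
-/

lemma integral_comp_sub_div (g : ℝ → ℝ) (γ δ : ℝ) :
    ∫ x, g ((x - δ) / γ) = |γ| * ∫ x, g x := by
  rw [← smul_eq_mul, ← Measure.integral_comp_div g γ]
  simpa only [sub_eq_add_neg] using integral_add_right_eq_self (fun y => g (y / γ)) (-δ)

section cigf

variable {F G : ℝ → ℝ}

lemma cigf_eq_integral_indicator (hF : Measurable F) (α β : ℝ) :
    cigf F α β = ∫ x, (Ioo 0 1).indicator (fun u => u ^ α * (1 - u) ^ β) (F x) := by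
  change ∫ x in F ⁻¹' Ioo 0 1, _ = _
  rw [← integral_indicator (hF measurableSet_Ioo)]
  rfl

lemma cigf_congr_ae (h : F =ᵐ[volume] G) (α β : ℝ) : cigf F α β = cigf G α β := by
  have hsupp : cigfSupport F =ᵐ[volume] cigfSupport G :=
    h.mono fun x hx => show (0 < F x ∧ F x < 1) = (0 < G x ∧ G x < 1) by rw [hx]
  calc cigf F α β = ∫ x in cigfSupport G, F x ^ α * (1 - F x) ^ β :=
        setIntegral_congr_set hsupp
    _ = cigf G α β :=
        integral_congr_ae (ae_restrict_of_ae (h.mono fun x hx => by simp only [hx]))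

lemma cigf_one_sub (α β : ℝ) : cigf (fun x => 1 - F x) α β = cigf F β α := by
  have hsupp : cigfSupport (fun x => 1 - F x) = cigfSupport F := by
    ext x
    change (0 < 1 - F x ∧ 1 - F x < 1) ↔ (0 < F x ∧ F x < 1)
    rw [sub_pos, sub_lt_self_iff, and_comm]
  rw [cigf, hsupp, cigf]
  simp only [sub_sub_cancel, mul_comm]

lemma cigf_comp_sub_div (hF : Measurable F) (γ δ α β : ℝ) :
    cigf (fun x => F ((x - δ) / γ)) α β = |γ| * cigf F α β := by
  have hF' : Measurable fun x => F ((x - δ) / γ) := hF.comp (by fun_prop)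
  rw [cigf_eq_integral_indicator hF', cigf_eq_integral_indicator hF]
  exact integral_comp_sub_div (fun t => (Ioo 0 1).indicator _ (F t)) γ δ

end cigf

section rvCDF

variable {Ω : Type*} [MeasurableSpace Ω] (P : Measure Ω) (X : Ω → ℝ) {γ : ℝ} (δ : ℝ)

lemma rvCDF_mono [IsFiniteMeasure P] : Monotone (rvCDF P X) := fun _ _ hab =>
  ENNReal.toReal_mono (measure_ne_top _ _) (measure_mono fun _ h => le_trans h hab)

lemma rvCDF_affine_of_pos (hγ : 0 < γ) (x : ℝ) :
    rvCDF P (fun ω => γ * X ω + δ) x = rvCDF P X ((x - δ) / γ) := by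
  have hset : {ω | γ * X ω + δ ≤ x} = {ω | X ω ≤ (x - δ) / γ} := by
    ext ω
    change γ * X ω + δ ≤ x ↔ X ω ≤ (x - δ) / γ
    rw [le_div_iff₀ hγ]
    constructor <;> intro <;> linarith
  rw [rvCDF, rvCDF, hset]

lemma rvCDF_affine_of_neg (hγ : γ < 0) (x : ℝ) :
    rvCDF P (fun ω => γ * X ω + δ) x = (P {ω | (x - δ) / γ ≤ X ω}).toReal := by
  have hset : {ω | γ * X ω + δ ≤ x} = {ω | (x - δ) / γ ≤ X ω} := by
    ext ω
    change γ * X ω + δ ≤ x ↔ (x - δ) / γ ≤ X ω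
    rw [div_le_iff_of_neg hγ]
    constructor <;> intro <;> linarith
  rw [rvCDF, hset]

lemma toReal_measure_le_eq_one_sub_rvCDF [IsProbabilityMeasure P] (hX : Measurable X) {t : ℝ}
    (ht : P {ω | X ω = t} = 0) : (P {ω | t ≤ X ω}).toReal = 1 - rvCDF P X t := by
  have hset : {ω | t ≤ X ω} \ {ω | X ω = t} = {ω | X ω ≤ t}ᶜ := by
    ext ω
    change t ≤ X ω ∧ X ω ≠ t ↔ ¬ X ω ≤ t
    rw [not_le]
    exact ⟨fun h => lt_of_le_of_ne h.1 (Ne.symm h.2), fun h => ⟨h.le, h.ne'⟩⟩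
  rw [← measure_sdiff_null ht, hset, prob_compl_eq_one_sub (measurableSet_le hX measurable_const),
    ENNReal.toReal_sub_of_le prob_le_one ENNReal.one_ne_top, ENNReal.toReal_one, rvCDF]

lemma ae_rvCDF_affine_of_neg [IsProbabilityMeasure P] (hX : Measurable X) (hγ : γ < 0) :
    ∀ᵐ x, rvCDF P (fun ω => γ * X ω + δ) x = 1 - rvCDF P X ((x - δ) / γ) := by
  have hinj : Function.Injective fun x : ℝ => (x - δ) / γ :=
    fun a b h => by simpa using (div_left_inj' hγ.ne).mp h
  have hatoms : volume ((fun x => (x - δ) / γ) ⁻¹' {t | 0 < P {ω | X ω = t}}) = 0 :=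
    ((Measure.countable_meas_level_set_pos hX).preimage hinj).measure_zero _
  filter_upwards [measure_eq_zero_iff_ae_notMem.mp hatoms] with x hx
  rw [rvCDF_affine_of_neg P X δ hγ, toReal_measure_le_eq_one_sub_rvCDF P X hX]
  simpa using hx

end rvCDF

theorem stmt0_general {Ω : Type*} [MeasurableSpace Ω] (P : Measure Ω) [IsProbabilityMeasure P]
    (X : Ω → ℝ) (hX : Measurable X) (γ δ : ℝ) (α β : ℝ) :
    (0 < γ → memD (rvCDF P X) α β →
      cigf (rvCDF P fun ω => γ * X ω + δ) α β = γ * cigf (rvCDF P X) α β) ∧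
    (γ < 0 → memD (rvCDF P X) β α →
      cigf (rvCDF P fun ω => γ * X ω + δ) α β = |γ| * cigf (rvCDF P X) β α) := by
  have hF : Measurable (rvCDF P X) := (rvCDF_mono P X).measurable
  refine ⟨fun hγ _ => ?_, fun hγ _ => ?_⟩
  · rw [funext (rvCDF_affine_of_pos P X δ hγ), cigf_comp_sub_div hF, abs_of_pos hγ]
  · rw [cigf_congr_ae (ae_rvCDF_affine_of_neg P X δ hX hγ),
      cigf_one_sub (F := fun x => rvCDF P X ((x - δ) / γ)), cigf_comp_sub_div hF]

/-- For `Y = γ X + δ`: if `γ > 0` and `(α, β) ∈ D_X` then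
`G_Y(α, β) = γ G_X(α, β)`; if `γ < 0` and `(β, α) ∈ D_X` then
`G_Y(α, β) = |γ| G_X(β, α)`. -/
theorem stmt0 {Ω : Type*} [MeasurableSpace Ω] (P : Measure Ω) [IsProbabilityMeasure P]
    (X : Ω → ℝ) (hX : Measurable X) (γ δ : ℝ) (hγ : γ ≠ 0) (α β : ℝ) :
    (0 < γ → memD (rvCDF P X) α β →
      cigf (rvCDF P fun ω => γ * X ω + δ) α β = γ * cigf (rvCDF P X) α β) ∧
    (γ < 0 → memD (rvCDF P X) β α →
      cigf (rvCDF P fun ω => γ * X ω + δ) α β = |γ| * cigf (rvCDF P X) β α) :=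
  stmt0_general P X hX γ δ α β
end

section
/- Let X be a real random variable whose CDF is symmetric about some m ∈ ℝ, i.e. F(m + x) = F̄(m − x) for all x ∈ ℝ. Then G_X(α, β) = G_X(β, α) for all (α, β) ∈ D_X. -/
open MeasureTheory ProbabilityTheory Set

/-- If the CDF of `X` is symmetric about `m`, i.e.
`F(m + x) = 1 - F(m - x)` for all `x`, then `G_X(α, β) = G_X(β, α)`
for all `(α, β) ∈ D_X`. -/
theorem stmt1 {Ω : Type*} [MeasurableSpace Ω] (P : Measure Ω) [IsProbabilityMeasure P]
    (X : Ω → ℝ) (hX : Measurable X)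
    (m : ℝ) (hsym : ∀ x : ℝ, rvCDF P X (m + x) = 1 - rvCDF P X (m - x))
    (α β : ℝ) (hD : memD (rvCDF P X) α β) :
    cigf (rvCDF P X) α β = cigf (rvCDF P X) β α := by
  set F := rvCDF P X with hF
  have hmono : Monotone F := by
    intro a b hab
    exact ENNReal.toReal_mono (measure_ne_top P _)
      (measure_mono fun ω hω => le_trans hω hab)
  have hS : MeasurableSet (cigfSupport F) :=
    hmono.measurable (measurableSet_Ioo : MeasurableSet (Ioo (0:ℝ) 1))
  have key : ∀ x, F (2 * m - x) = 1 - F x := by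
    intro x
    have h := hsym (m - x)
    have h2 : m + (m - x) = 2 * m - x := by ring
    have h3 : m - (m - x) = x := by ring
    rw [h2, h3] at h
    exact h
  have hmem : ∀ x : ℝ, (2 * m - x ∈ cigfSupport F) ↔ x ∈ cigfSupport F := by
    intro x
    simp only [cigfSupport, mem_setOf_eq, key]
    constructor <;> rintro ⟨h1, h2⟩ <;> constructor <;> linarith
  have hptw : ∀ x : ℝ,
      indicator (cigfSupport F) (fun y => F y ^ β * (1 - F y) ^ α) (2 * m - x)
        = indicator (cigfSupport F) (fun y => F y ^ α * (1 - F y) ^ β) x := by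
    intro x
    by_cases hx : x ∈ cigfSupport F
    · rw [indicator_of_mem ((hmem x).mpr hx), indicator_of_mem hx, key]
      ring
    · rw [indicator_of_notMem (fun h => hx ((hmem x).mp h)), indicator_of_notMem hx]
  calc cigf F α β
      = ∫ x, indicator (cigfSupport F) (fun y => F y ^ α * (1 - F y) ^ β) x := by
        rw [integral_indicator hS]; rfl
    _ = ∫ x, indicator (cigfSupport F) (fun y => F y ^ β * (1 - F y) ^ α) (2 * m - x) := by
        exact integral_congr_ae (Filter.Eventually.of_forall fun x => (hptw x).symm)
    _ = ∫ x, indicator (cigfSupport F) (fun y => F y ^ β * (1 - F y) ^ α) x :=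
        integral_sub_left_eq_self _ volume (2 * m)
    _ = cigf F β α := by rw [integral_indicator hS]; rfl
end

section
/- Let X be a real random variable such that G_X(0, β) < ∞ for all β in some open interval containing 1. Then the function β ↦ G_X(0, β) is differentiable at β = 1 and its derivative there equals −𝒞ℛℰ(X), i.e. 𝒞ℛℰ(X) = −(∂/∂β) G_X(0, β)|_{β=1}. -/
/-! On the support `0 < F < 1`, so `G(0, β) = ∫ y ^ β` with `y = 1 - F ∈ (0, 1]`, and one may
differentiate under the integral sign. Since `-log y ≤ y ^ (-δ) / δ`, the
`β`-derivatives `y ^ β * log y` for `β` near `1` are dominated by `y ^ c / δ` for any `c < 1`,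
which is integrable once `c` lies in the interval where `G(0, ·)` is finite. At `β = 1` the
derivative integrand is `(1 - F) * log (1 - F)`, whose integral is `-𝒞ℛℰ`. -/

open MeasureTheory ProbabilityTheory Set

/-- The cumulative residual entropy `𝒞ℛℰ(X) = -∫_l^r (1 - F x) log (1 - F x) dx`. -/
noncomputable def CRE (F : ℝ → ℝ) : ℝ :=
  -∫ x in cigfSupport F, (1 - F x) * Real.log (1 - F x)

lemma Real.norm_rpow_mul_log_le {y c β δ : ℝ} (hy₀ : 0 < y) (hy₁ : y ≤ 1) (hδ : 0 < δ)
    (hβ : c + δ ≤ β) : ‖y ^ β * Real.log y‖ ≤ y ^ c / δ := by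
  have hlog : -Real.log y ≤ y ^ (-δ) / δ := by
    simpa [Real.log_inv, Real.inv_rpow hy₀.le, Real.rpow_neg hy₀.le] using
      Real.log_le_rpow_div (inv_nonneg.2 hy₀.le) hδ
  rw [Real.norm_eq_abs, abs_mul, abs_of_nonneg (Real.rpow_nonneg hy₀.le β),
    abs_of_nonpos (Real.log_nonpos hy₀.le hy₁)]
  calc y ^ β * -Real.log y ≤ y ^ (c + δ) * (y ^ (-δ) / δ) :=
        mul_le_mul (Real.rpow_le_rpow_of_exponent_ge hy₀ hy₁ hβ) hlog
          (by linarith [Real.log_nonpos hy₀.le hy₁]) (Real.rpow_nonneg hy₀.le _)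
    _ = y ^ c / δ := by
        rw [mul_div_assoc', ← Real.rpow_add hy₀, add_neg_cancel_right]

theorem hasDerivAt_integral_rpow {α : Type*} [MeasurableSpace α] {μ : Measure α} {f : α → ℝ}
    (hf : AEMeasurable f μ) (hf_mem : ∀ᵐ x ∂μ, f x ∈ Ioc 0 1) {c β₀ : ℝ} (hc : c < β₀)
    (hint : Integrable (fun x => f x ^ c) μ) :
    HasDerivAt (fun β => ∫ x, f x ^ β ∂μ) (∫ x, f x ^ β₀ * Real.log (f x) ∂μ) β₀ := by
  set δ := (β₀ - c) / 2
  have hδ : 0 < δ := by simp only [δ]; linarith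
  have hint₀ : Integrable (fun x => f x ^ β₀) μ :=
    hint.mono' (hf.pow_const β₀).aestronglyMeasurable <| hf_mem.mono fun x hx => by
      rw [Real.norm_of_nonneg (Real.rpow_nonneg hx.1.le _)]
      exact Real.rpow_le_rpow_of_exponent_ge hx.1 hx.2 hc.le
  refine (hasDerivAt_integral_of_dominated_loc_of_deriv_le (F := fun β x => f x ^ β)
    (F' := fun β x => f x ^ β * Real.log (f x)) (bound := fun x => f x ^ c / δ)
    (Ioi_mem_nhds (show c + δ < β₀ by simp only [δ]; linarith))
    (Filter.Eventually.of_forall fun β => (hf.pow_const β).aestronglyMeasurable) hint₀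
    ((hf.pow_const β₀).mul hf.log).aestronglyMeasurable ?_ (hint.div_const δ) ?_).2
  · exact hf_mem.mono fun x hx β hβ => Real.norm_rpow_mul_log_le hx.1 hx.2 hδ hβ.le
  · exact hf_mem.mono fun x hx β _ => (Real.hasStrictDerivAt_const_rpow hx.1 β).hasDerivAt

lemma monotone_rvCDF {Ω : Type*} [MeasurableSpace Ω] (P : Measure Ω) [IsFiniteMeasure P]
    (X : Ω → ℝ) : Monotone (rvCDF P X) := fun _ _ hxy =>
  ENNReal.toReal_mono (measure_ne_top _ _) (measure_mono fun _ h => le_trans h hxy)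

lemma measurableSet_cigfSupport {F : ℝ → ℝ} (hF : Measurable F) :
    MeasurableSet (cigfSupport F) :=
  hF measurableSet_Ioo

theorem stmt4_general {Ω : Type*} [MeasurableSpace Ω] (P : Measure Ω) [IsProbabilityMeasure P]
    (X : Ω → ℝ)
    (a b : ℝ) (ha : a < 1) (hb : 1 < b)
    (hfin : ∀ β ∈ Ioo a b, memD (rvCDF P X) 0 β) :
    HasDerivAt (fun β => cigf (rvCDF P X) 0 β) (-(CRE (rvCDF P X))) 1 := by
  set F := rvCDF P X
  have hF : Measurable F := (monotone_rvCDF P X).measurable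
  have hsurv : ∀ᵐ x ∂volume.restrict (cigfSupport F), 1 - F x ∈ Ioc 0 1 :=
    ae_restrict_of_forall_mem (measurableSet_cigfSupport hF) fun x hx =>
      ⟨by linarith [hx.2], by linarith [hx.1]⟩
  have hc : (a + 1) / 2 ∈ Ioo a b := ⟨by linarith, by linarith⟩
  have key := hasDerivAt_integral_rpow (measurable_const.sub hF).aemeasurable hsurv
    (show (a + 1) / 2 < 1 by linarith) (by simpa [memD, IntegrableOn] using hfin _ hc)
  simpa [cigf, CRE] using key

/-- If `G_X(0, β) < ∞` for all `β` in an open interval containing `1`, then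
`β ↦ G_X(0, β)` is differentiable at `β = 1` with derivative `-𝒞ℛℰ(X)`. -/
theorem stmt4 {Ω : Type*} [MeasurableSpace Ω] (P : Measure Ω) [IsProbabilityMeasure P]
    (X : Ω → ℝ) (hX : Measurable X)
    (a b : ℝ) (ha : a < 1) (hb : 1 < b)
    (hfin : ∀ β ∈ Ioo a b, memD (rvCDF P X) 0 β) :
    HasDerivAt (fun β => cigf (rvCDF P X) 0 β) (-(CRE (rvCDF P X))) 1 :=
  stmt4_general P X a b ha hb hfin
end

section
/- Let X be a real random variable such that G_X(α, 0) < ∞ for all α in some open interval containing 1, and let n ∈ ℕ. Then the function α ↦ G_X(α, 0) is n times differentiable at α = 1 and 𝒞ℰ_n(X) = ((−1)^n / n!) · (∂^n/∂α^n) G_X(α, 0)|_{α=1}. -/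
/-!
On the support `0 < F < 1`, the bound `t ^ δ * |log t| ^ k ≤ k! / δ ^ k` for `0 < t ≤ 1`
(from `x ^ k / k! ≤ exp x`) dominates the `s`-derivatives `F ^ s * (log F) ^ k` of `F ^ s`,
uniformly for `s` near `1`, by a multiple of `F ^ s₀`, where `s₀ < 1` is any exponent at which
`G(s₀, 0)` is finite. Differentiating under the integral sign `n` times then gives
`G⁽ⁿ⁾(1) = ∫ F (log F) ^ n = (-1) ^ n n! 𝒞ℰₙ`.
-/

open MeasureTheory ProbabilityTheory Set

open Real
open scoped Nat

lemma Real.rpow_mul_abs_log_pow_le {t δ : ℝ} (k : ℕ) (ht₀ : 0 < t) (ht₁ : t ≤ 1) (hδ : 0 < δ) :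
    t ^ δ * |log t| ^ k ≤ k ! / δ ^ k := by
  have hlog : log t ≤ 0 := log_nonpos ht₀.le ht₁
  have hexp := pow_div_factorial_le_exp _ (mul_nonneg hδ.le (neg_nonneg.2 hlog)) k
  rw [mul_pow, div_le_iff₀ (by positivity)] at hexp
  rw [rpow_def_of_pos ht₀, abs_of_nonpos hlog, le_div_iff₀ (by positivity)]
  calc exp (log t * δ) * (-log t) ^ k * δ ^ k
      = exp (log t * δ) * (δ ^ k * (-log t) ^ k) := by ring
    _ ≤ exp (log t * δ) * (exp (δ * -log t) * k !) := by gcongr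
    _ = k ! := by rw [← mul_assoc, ← exp_add]; ring_nf; simp

lemma Real.norm_rpow_mul_log_pow_le {t s₀ s δ : ℝ} (k : ℕ) (ht₀ : 0 < t) (ht₁ : t ≤ 1)
    (hδ : 0 < δ) (hs : s₀ + δ ≤ s) :
    ‖t ^ s * log t ^ k‖ ≤ k ! / δ ^ k * t ^ s₀ := by
  rw [norm_mul, norm_pow, norm_of_nonneg (rpow_nonneg ht₀.le _), norm_eq_abs]
  calc t ^ s * |log t| ^ k
      ≤ t ^ (s₀ + δ) * |log t| ^ k := by
        gcongr ?_ * _; exact rpow_le_rpow_of_exponent_ge ht₀ ht₁ hs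
    _ = t ^ s₀ * (t ^ δ * |log t| ^ k) := by rw [rpow_add ht₀]; ring
    _ ≤ t ^ s₀ * (k ! / δ ^ k) := by
        gcongr; exact rpow_mul_abs_log_pow_le k ht₀ ht₁ hδ
    _ = k ! / δ ^ k * t ^ s₀ := mul_comm _ _

section PowLogIntegral

variable {Ω : Type*} [MeasurableSpace Ω] {μ : Measure Ω} {f : Ω → ℝ} {s₀ s : ℝ}

/-- `∂ₛᵏ ∫ f ^ s dμ`, computed under the integral sign. -/
noncomputable def powLogIntegral (μ : Measure Ω) (f : Ω → ℝ) (k : ℕ) (s : ℝ) : ℝ :=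
  ∫ x, f x ^ s * log (f x) ^ k ∂μ

lemma aestronglyMeasurable_rpow_mul_log_pow (hf : AEMeasurable f μ) (k : ℕ) (s : ℝ) :
    AEStronglyMeasurable (fun x => f x ^ s * log (f x) ^ k) μ :=
  ((hf.pow_const s).mul (hf.log.pow_const k)).aestronglyMeasurable

variable (hf : AEMeasurable f μ) (hf01 : ∀ᵐ x ∂μ, f x ∈ Ioc 0 1)
  (hint : Integrable (fun x => f x ^ s₀) μ)
include hf hf01 hint

lemma integrable_rpow_mul_log_pow (k : ℕ) (hs : s₀ < s) :
    Integrable (fun x => f x ^ s * log (f x) ^ k) μ :=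
  (hint.const_mul _).mono' (aestronglyMeasurable_rpow_mul_log_pow hf k s) <|
    hf01.mono fun _ hx => norm_rpow_mul_log_pow_le k hx.1 hx.2 (sub_pos.2 hs) (by linarith)

lemma hasDerivAt_powLogIntegral (k : ℕ) (hs : s₀ < s) :
    HasDerivAt (powLogIntegral μ f k) (powLogIntegral μ f (k + 1) s) s := by
  set ε := (s - s₀) / 2
  have hε : 0 < ε := by simp only [ε]; linarith
  have hbound : ∀ᵐ x ∂μ, ∀ t ∈ Metric.ball s ε,
      ‖f x ^ t * log (f x) ^ (k + 1)‖ ≤ (k + 1)! / ε ^ (k + 1) * f x ^ s₀ := by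
    filter_upwards [hf01] with x hx t ht
    rw [Metric.mem_ball, Real.dist_eq, abs_lt] at ht
    exact norm_rpow_mul_log_pow_le (k + 1) hx.1 hx.2 hε (by simp only [ε] at ht ⊢; linarith)
  have hderiv : ∀ᵐ x ∂μ, ∀ t ∈ Metric.ball s ε, HasDerivAt (fun t => f x ^ t * log (f x) ^ k)
      (f x ^ t * log (f x) ^ (k + 1)) t := by
    filter_upwards [hf01] with x hx t _
    rw [pow_succ', ← mul_assoc]
    exact (hasStrictDerivAt_const_rpow hx.1 t).hasDerivAt.mul_const _
  exact (hasDerivAt_integral_of_dominated_loc_of_deriv_le (Metric.ball_mem_nhds s hε)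
    (.of_forall fun t => aestronglyMeasurable_rpow_mul_log_pow hf k t)
    (integrable_rpow_mul_log_pow hf hf01 hint k hs)
    (aestronglyMeasurable_rpow_mul_log_pow hf (k + 1) s) hbound (hint.const_mul _) hderiv).2

lemma contDiffOn_powLogIntegral (N k : ℕ) : ContDiffOn ℝ N (powLogIntegral μ f k) (Ioi s₀) := by
  induction N generalizing k with
  | zero =>
    exact contDiffOn_zero.2 fun s hs =>
      (hasDerivAt_powLogIntegral hf hf01 hint k hs).continuousAt.continuousWithinAt
  | succ N ih =>
    rw [Nat.cast_succ, contDiffOn_succ_iff_deriv_of_isOpen isOpen_Ioi]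
    refine ⟨fun s hs =>
        (hasDerivAt_powLogIntegral hf hf01 hint k hs).differentiableAt.differentiableWithinAt,
      by simp, (ih (k + 1)).congr fun s hs => (hasDerivAt_powLogIntegral hf hf01 hint k hs).deriv⟩

lemma iteratedDeriv_powLogIntegral_zero (k : ℕ) (hs : s₀ < s) :
    iteratedDeriv k (powLogIntegral μ f 0) s = powLogIntegral μ f k s := by
  induction k generalizing s with
  | zero => rfl
  | succ k ih =>
    have hk : iteratedDeriv k (powLogIntegral μ f 0) =ᶠ[nhds s] powLogIntegral μ f k :=
      Filter.eventually_of_mem (Ioi_mem_nhds hs) fun _ ht => ih ht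
    rw [iteratedDeriv_succ, hk.deriv_eq, (hasDerivAt_powLogIntegral hf hf01 hint k hs).deriv]

end PowLogIntegral

theorem stmt7_general {Ω : Type*} [MeasurableSpace Ω] (P : Measure Ω)
    (X : Ω → ℝ) (n : ℕ)
    (a b : ℝ) (ha : a < 1) (hb : 1 < b)
    (hfin : ∀ α ∈ Ioo a b, memD (rvCDF P X) α 0) :
    ContDiffAt ℝ n (fun α => cigf (rvCDF P X) α 0) 1 ∧
    (n.factorial : ℝ)⁻¹ *
        ∫ x in cigfSupport (rvCDF P X),
          rvCDF P X x * (-Real.log (rvCDF P X x)) ^ n =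
      ((-1 : ℝ) ^ n / (n.factorial : ℝ)) *
        iteratedDeriv n (fun α => cigf (rvCDF P X) α 0) 1 := by
  set F := rvCDF P X
  have hFm : Measurable F :=
    Measurable.ennreal_toReal (f := fun x => P {ω | X ω ≤ x})
      (Monotone.measurable fun _ _ hxy => measure_mono fun _ hω => le_trans hω hxy)
  have hF01 : ∀ᵐ x ∂volume.restrict (cigfSupport F), F x ∈ Ioc 0 1 :=
    ae_restrict_of_forall_mem (hFm measurableSet_Ioo) fun _ hx => ⟨hx.1, hx.2.le⟩
  obtain ⟨s₀, has₀, hs₀⟩ := exists_between ha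
  have hint : IntegrableOn (fun x => F x ^ s₀) (cigfSupport F) := by
    simpa [memD] using hfin s₀ ⟨has₀, hs₀.trans hb⟩
  have hG : (fun α => cigf F α 0) = powLogIntegral (volume.restrict (cigfSupport F)) F 0 := by
    funext α; simp [cigf, powLogIntegral]
  rw [hG, iteratedDeriv_powLogIntegral_zero hFm.aemeasurable hF01 hint n hs₀]
  refine ⟨(contDiffOn_powLogIntegral hFm.aemeasurable hF01 hint n 0).contDiffAt (Ioi_mem_nhds hs₀),
    ?_⟩
  simp only [powLogIntegral, rpow_one, neg_pow (log _), ← integral_const_mul]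
  ring_nf

/-- If `G_X(α, 0) < ∞` for all `α` in an open interval containing `1`, then
`α ↦ G_X(α, 0)` is `n` times differentiable at `α = 1` and
`𝒞ℰ_n(X) = ((-1)^n / n!) ∂^n/∂α^n G_X(α, 0) |_{α=1}` for `n ∈ ℕ`, `n ≥ 1`. -/
theorem stmt7 {Ω : Type*} [MeasurableSpace Ω] (P : Measure Ω) [IsProbabilityMeasure P]
    (X : Ω → ℝ) (hX : Measurable X) (n : ℕ) (hn : 0 < n)
    (a b : ℝ) (ha : a < 1) (hb : 1 < b)
    (hfin : ∀ α ∈ Ioo a b, memD (rvCDF P X) α 0) :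
    ContDiffAt ℝ n (fun α => cigf (rvCDF P X) α 0) 1 ∧
    (n.factorial : ℝ)⁻¹ *
        ∫ x in cigfSupport (rvCDF P X),
          rvCDF P X x * (-Real.log (rvCDF P X x)) ^ n =
      ((-1 : ℝ) ^ n / (n.factorial : ℝ)) *
        iteratedDeriv n (fun α => cigf (rvCDF P X) α 0) 1 :=
  stmt7_general P X n a b ha hb hfin
end

section
/- Let X be a real random variable and let α ∈ [0, 1] and β ∈ ℝ be such that K_X(β) = G_X(0, β) < ∞. Then G_X(α, β) ≤ K_X(β) − α · K_X(β + 1). -/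
open MeasureTheory ProbabilityTheory Set

lemma cdfOf_mono (μ : Measure ℝ) [IsProbabilityMeasure μ] : Monotone (cdfOf μ) := by
  intro a b hab
  exact ENNReal.toReal_mono (measure_ne_top μ _) (measure_mono (Iic_subset_Iic.mpr hab))

/-- For `α ∈ [0,1]` and `β ∈ ℝ` with `K_X(β) = G_X(0, β) < ∞`,
one has `G_X(α, β) ≤ K_X(β) - α K_X(β + 1)`. -/
theorem stmt9 (μ : Measure ℝ) [IsProbabilityMeasure μ]
    (α β : ℝ) (hα : α ∈ Icc (0:ℝ) 1) (hK : memD (cdfOf μ) 0 β) :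
    cigf (cdfOf μ) α β ≤ cigf (cdfOf μ) 0 β - α * cigf (cdfOf μ) 0 (β + 1) := by
  obtain ⟨hα0, hα1⟩ := hα
  set F := cdfOf μ with hF
  have hFm : Measurable F := (cdfOf_mono μ).measurable
  have hS : MeasurableSet (cigfSupport F) :=
    (measurableSet_lt measurable_const hFm).inter (measurableSet_lt hFm measurable_const)
  -- integrability of h = (1-F)^β on S
  have hKh : IntegrableOn (fun x => (1 - F x) ^ β) (cigfSupport F) := by
    have := hK
    unfold memD at this
    simpa [Real.rpow_zero] using this
  have hmeasg : Measurable (fun x => (1 - F x) ^ (β + 1)) :=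
    (measurable_const.sub hFm).pow measurable_const
  have hmeasf : Measurable (fun x => F x ^ α * (1 - F x) ^ β) :=
    (hFm.pow measurable_const).mul ((measurable_const.sub hFm).pow measurable_const)
  -- basic facts on S
  have hbound : ∀ x ∈ cigfSupport F,
      F x ^ α * (1 - F x) ^ β ≤ (1 - F x) ^ β - α * (1 - F x) ^ (β + 1) := by
    intro x hx
    obtain ⟨hx0, hx1⟩ := hx
    have h1F : 0 < 1 - F x := by linarith
    have hBern : F x ^ α ≤ 1 - α * (1 - F x) := by
      have := rpow_one_add_le_one_add_mul_self (s := F x - 1) (by linarith) hα0 hα1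
      have h' : (F x) ^ α ≤ 1 + α * (F x - 1) := by
        simpa using this
      linarith [h']
    have h2 : (1 - F x) ^ (β + 1) = (1 - F x) ^ β * (1 - F x) :=
      Real.rpow_add_one h1F.ne' β
    have h3 : 0 ≤ (1 - F x) ^ β := Real.rpow_nonneg h1F.le β
    calc F x ^ α * (1 - F x) ^ β ≤ (1 - α * (1 - F x)) * (1 - F x) ^ β :=
          mul_le_mul_of_nonneg_right hBern h3
      _ = (1 - F x) ^ β - α * (1 - F x) ^ (β + 1) := by rw [h2]; ring
  -- integrability of g on S by domination
  have hKg : IntegrableOn (fun x => (1 - F x) ^ (β + 1)) (cigfSupport F) := by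
    refine Integrable.mono hKh hmeasg.aestronglyMeasurable ?_
    rw [ae_restrict_iff' hS]
    filter_upwards with x hx
    obtain ⟨hx0, hx1⟩ := hx
    have h1F : 0 < 1 - F x := by linarith
    rw [Real.norm_eq_abs, Real.norm_eq_abs, abs_of_nonneg (Real.rpow_nonneg h1F.le _),
      abs_of_nonneg (Real.rpow_nonneg h1F.le _)]
    calc (1 - F x) ^ (β + 1) = (1 - F x) ^ β * (1 - F x) := Real.rpow_add_one h1F.ne' β
      _ ≤ (1 - F x) ^ β * 1 := by
          exact mul_le_mul_of_nonneg_left (by linarith) (Real.rpow_nonneg h1F.le _)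
      _ = (1 - F x) ^ β := mul_one _
  -- integrability of f on S by domination
  have hKf : IntegrableOn (fun x => F x ^ α * (1 - F x) ^ β) (cigfSupport F) := by
    refine Integrable.mono hKh hmeasf.aestronglyMeasurable ?_
    rw [ae_restrict_iff' hS]
    filter_upwards with x hx
    obtain ⟨hx0, hx1⟩ := hx
    have h1F : 0 < 1 - F x := by linarith
    have h3 : 0 ≤ (1 - F x) ^ β := Real.rpow_nonneg h1F.le β
    have h4 : 0 ≤ F x ^ α := Real.rpow_nonneg hx0.le α
    rw [Real.norm_eq_abs, Real.norm_eq_abs, abs_of_nonneg (mul_nonneg h4 h3),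
      abs_of_nonneg h3]
    have h5 : F x ^ α ≤ 1 := Real.rpow_le_one hx0.le hx1.le hα0
    calc F x ^ α * (1 - F x) ^ β ≤ 1 * (1 - F x) ^ β :=
          mul_le_mul_of_nonneg_right h5 h3
      _ = (1 - F x) ^ β := one_mul _
  -- conclude
  have hint : cigf F α β ≤ ∫ x in cigfSupport F, ((1 - F x) ^ β - α * (1 - F x) ^ (β + 1)) := by
    refine setIntegral_mono_on hKf (hKh.sub (hKg.const_mul α)) hS hbound
  have heq : (∫ x in cigfSupport F, ((1 - F x) ^ β - α * (1 - F x) ^ (β + 1)))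
      = cigf F 0 β - α * cigf F 0 (β + 1) := by
    rw [integral_sub hKh (hKg.const_mul α), integral_const_mul]
    unfold cigf
    simp [Real.rpow_zero]
  linarith [hint, heq ▸ hint]
end

section
/- Let X be a real random variable with bounded support, so that −∞ < l < r < ∞. Then for every γ ≥ 1, ((r − l)^{1/γ} − H_X(γ)^{1/γ})^γ ≤ K_X(γ) ≤ ((r − l)^{1/γ} + H_X(γ)^{1/γ})^γ. -/
/-!
Write `F` for the distribution function and `‖·‖` for the `L^γ` norm on `(l, r)`, `γ ≥ 1`. Then
`‖1‖ = (r - l)^(1/γ)`, `‖F‖ = H_X(γ)^(1/γ)` and `‖1 - F‖ = K_X(γ)^(1/γ)`, so both bounds are the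
triangle inequalities `‖1‖ - ‖F‖ ≤ ‖1 - F‖ ≤ ‖1‖ + ‖F‖` raised to the power `γ`; the left-hand
side is nonnegative because `0 ≤ F ≤ 1`.
-/

open MeasureTheory ProbabilityTheory Set

section LpNorm

variable {α : Type*} [MeasurableSpace α] {ν : Measure α} {p : ℝ}

lemma lpNorm_ofReal_eq_integral_rpow_of_nonneg {f : α → ℝ} (hp : 0 < p)
    (hf : AEStronglyMeasurable f ν) (hf0 : ∀ x, 0 ≤ f x) :
    lpNorm f (ENNReal.ofReal p) ν = (∫ x, f x ^ p ∂ν) ^ (1 / p) := by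
  rw [lpNorm_eq_integral_norm_rpow_toReal (by simpa using hp) ENNReal.ofReal_ne_top hf,
    ENNReal.toReal_ofReal hp.le, one_div]
  simp only [Real.norm_of_nonneg (hf0 _)]

theorem integral_one_sub_rpow_mem_Icc [IsFiniteMeasure ν] {f : α → ℝ}
    (hf : AEStronglyMeasurable f ν) (hf0 : ∀ x, 0 ≤ f x) (hf1 : ∀ x, f x ≤ 1) (hp : 1 ≤ p) :
    ((ν.real univ) ^ (1 / p) - (∫ x, f x ^ p ∂ν) ^ (1 / p)) ^ p ≤ ∫ x, (1 - f x) ^ p ∂ν ∧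
      ∫ x, (1 - f x) ^ p ∂ν ≤ ((ν.real univ) ^ (1 / p) + (∫ x, f x ^ p ∂ν) ^ (1 / p)) ^ p := by
  have hp0 : 0 < p := zero_lt_one.trans_le hp
  set q := ENNReal.ofReal p
  have hq : 1 ≤ q := by simpa [q] using hp
  have hnorm_le_one : ∀ x, ‖f x‖ ≤ (1 : α → ℝ) x := fun x => by
    simpa [Real.norm_of_nonneg (hf0 x)] using hf1 x
  have hone : MemLp (1 : α → ℝ) q ν := memLp_const 1
  have hfLp : MemLp f q ν := .of_bound hf 1 (ae_of_all _ hnorm_le_one)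
  have hnorm_one : lpNorm (1 : α → ℝ) q ν = ν.real univ ^ (1 / p) := by
    rw [lpNorm_one' (by simpa [q] using hp0) ENNReal.ofReal_ne_top, ENNReal.toReal_ofReal hp0.le,
      one_div]
  have hnorm_f : lpNorm f q ν = (∫ x, f x ^ p ∂ν) ^ (1 / p) :=
    lpNorm_ofReal_eq_integral_rpow_of_nonneg hp0 hf hf0
  have hnorm_sub : lpNorm (1 - f) q ν = (∫ x, (1 - f x) ^ p ∂ν) ^ (1 / p) :=
    lpNorm_ofReal_eq_integral_rpow_of_nonneg hp0 (aestronglyMeasurable_const.sub hf)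
      fun x => sub_nonneg.2 (hf1 x)
  have hupper : lpNorm (1 - f) q ν ≤ lpNorm 1 q ν + lpNorm f q ν := lpNorm_sub_le hone hq
  have hlower : lpNorm 1 q ν ≤ lpNorm f q ν + lpNorm (1 - f) q ν :=
    lpNorm_le_lpNorm_add_lpNorm_sub' hfLp hq
  have hmono : lpNorm f q ν ≤ lpNorm 1 q ν := lpNorm_mono_real hone hnorm_le_one
  have hK : ∫ x, (1 - f x) ^ p ∂ν = lpNorm (1 - f) q ν ^ p := by
    rw [hnorm_sub, ← Real.rpow_mul (integral_nonneg fun x => Real.rpow_nonneg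
      (sub_nonneg.2 (hf1 x)) p), one_div_mul_cancel hp0.ne', Real.rpow_one]
  rw [hK, ← hnorm_one, ← hnorm_f]
  exact ⟨Real.rpow_le_rpow (sub_nonneg.2 hmono) (by linarith) hp0.le,
    Real.rpow_le_rpow lpNorm_nonneg hupper hp0.le⟩

end LpNorm

lemma cdfOf_eq_cdf (μ : Measure ℝ) [IsProbabilityMeasure μ] : cdfOf μ = cdf μ := by
  ext x
  rw [cdf_eq_real]
  rfl

theorem stmt10_general (μ : Measure ℝ) [IsProbabilityMeasure μ]
    (l r : ℝ) (hlr : l < r)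
    (γ : ℝ) (hγ : 1 ≤ γ) :
    ((r - l) ^ (1/γ) - (∫ x in Ioo l r, cdfOf μ x ^ γ) ^ (1/γ)) ^ γ ≤
        ∫ x in Ioo l r, (1 - cdfOf μ x) ^ γ ∧
    ∫ x in Ioo l r, (1 - cdfOf μ x) ^ γ ≤
        ((r - l) ^ (1/γ) + (∫ x in Ioo l r, cdfOf μ x ^ γ) ^ (1/γ)) ^ γ := by
  have hlength : (volume.restrict (Ioo l r)).real univ = r - l := by simp [hlr.le]
  rw [← hlength, cdfOf_eq_cdf]
  exact integral_one_sub_rpow_mem_Icc (monotone_cdf μ).measurable.aestronglyMeasurable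
    (cdf_nonneg μ) (cdf_le_one μ) hγ

/-- Minkowski-type bounds: for a random variable with bounded support
`(l, r)` and `γ ≥ 1`,
`((r-l)^(1/γ) - H_X(γ)^(1/γ))^γ ≤ K_X(γ) ≤ ((r-l)^(1/γ) + H_X(γ)^(1/γ))^γ`,
where `H_X(γ) = ∫_l^r F(x)^γ dx` and `K_X(γ) = ∫_l^r (1-F(x))^γ dx`. -/
theorem stmt10 (μ : Measure ℝ) [IsProbabilityMeasure μ]
    (l r : ℝ) (hlr : l < r)
    (hl : IsGLB {x | 0 < cdfOf μ x} l) (hr : IsLUB {x | cdfOf μ x < 1} r)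
    (γ : ℝ) (hγ : 1 ≤ γ) :
    ((r - l) ^ (1/γ) - (∫ x in Ioo l r, cdfOf μ x ^ γ) ^ (1/γ)) ^ γ ≤
        ∫ x in Ioo l r, (1 - cdfOf μ x) ^ γ ∧
    ∫ x in Ioo l r, (1 - cdfOf μ x) ^ γ ≤
        ((r - l) ^ (1/γ) + (∫ x in Ioo l r, cdfOf μ x ^ γ) ^ (1/γ)) ^ γ :=
  stmt10_general μ l r hlr γ hγ
end

section
/- Let X be a real random variable with bounded support, so that −∞ < l < r < ∞. Then for every θ ∈ (0, 1), G_X(θ, 1 − θ) ≤ (r − E[X])^θ · (E[X] − l)^{1−θ}. -/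
open MeasureTheory ProbabilityTheory Set

open Filter Topology

/-! Since `X ∈ [l, r]` almost surely, the layer-cake formula for `r - X` gives
`∫_l^r F = r - E[X]`, hence `∫_l^r (1 - F) = E[X] - l`; the bound is then Hölder's inequality
`∫ F^θ (1 - F)^(1 - θ) ≤ (∫ F)^θ (∫ (1 - F))^(1 - θ)`. -/

namespace MeasureTheory

variable {α : Type*} [MeasurableSpace α] {μ : Measure α}

theorem integral_rpow_mul_rpow_le {f g : α → ℝ} (hf_nonneg : 0 ≤ᵐ[μ] f) (hg_nonneg : 0 ≤ᵐ[μ] g)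
    (hf : Integrable f μ) (hg : Integrable g μ) {p q : ℝ} (hp : 0 ≤ p) (hq : 0 ≤ q)
    (hpq : p + q = 1) :
    ∫ a, f a ^ p * g a ^ q ∂μ ≤ (∫ a, f a ∂μ) ^ p * (∫ a, g a ∂μ) ^ q := by
  have hfg_nonneg : 0 ≤ᵐ[μ] fun a => f a ^ p * g a ^ q := by
    filter_upwards [hf_nonneg, hg_nonneg] with a hfa hga
    exact mul_nonneg (Real.rpow_nonneg hfa p) (Real.rpow_nonneg hga q)
  have hfg_meas : AEStronglyMeasurable (fun a => f a ^ p * g a ^ q) μ :=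
    ((hf.aemeasurable.pow_const p).mul (hg.aemeasurable.pow_const q)).aestronglyMeasurable
  have hofReal : ∀ᵐ a ∂μ, ENNReal.ofReal (f a ^ p * g a ^ q)
      = ENNReal.ofReal (f a) ^ p * ENNReal.ofReal (g a) ^ q := by
    filter_upwards [hf_nonneg, hg_nonneg] with a hfa hga
    rw [ENNReal.ofReal_mul (Real.rpow_nonneg hfa p), ENNReal.ofReal_rpow_of_nonneg hfa hp,
      ENNReal.ofReal_rpow_of_nonneg hga hq]
  have hfin : (∫⁻ a, ENNReal.ofReal (f a) ∂μ) ^ p * (∫⁻ a, ENNReal.ofReal (g a) ∂μ) ^ q ≠ ⊤ :=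
    ENNReal.mul_ne_top (ENNReal.rpow_ne_top_of_nonneg hp hf.lintegral_lt_top.ne)
      (ENNReal.rpow_ne_top_of_nonneg hq hg.lintegral_lt_top.ne)
  rw [integral_eq_lintegral_of_nonneg_ae hfg_nonneg hfg_meas,
    integral_eq_lintegral_of_nonneg_ae hf_nonneg hf.aestronglyMeasurable,
    integral_eq_lintegral_of_nonneg_ae hg_nonneg hg.aestronglyMeasurable,
    ENNReal.toReal_rpow, ENNReal.toReal_rpow, ← ENNReal.toReal_mul, lintegral_congr_ae hofReal]
  exact ENNReal.toReal_mono hfin <| ENNReal.lintegral_mul_norm_pow_le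
    hf.aemeasurable.ennreal_ofReal hg.aemeasurable.ennreal_ofReal hp hq hpq

end MeasureTheory

namespace ProbabilityTheory

variable {μ : Measure ℝ}

lemma cdf_eq_zero_of_isGLB {l x : ℝ} (hl : IsGLB {x | 0 < cdf μ x} l) (hx : x < l) :
    cdf μ x = 0 :=
  (cdf_nonneg μ x).antisymm' (not_lt.mp fun h => (hl.1 h).not_gt hx)

lemma cdf_eq_one_of_isLUB {r x : ℝ} (hr : IsLUB {x | cdf μ x < 1} r) (hx : r < x) :
    cdf μ x = 1 :=
  (cdf_le_one μ x).antisymm (not_lt.mp fun h => (hr.1 h).not_gt hx)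

lemma integrableOn_cdf_Ioo {l r : ℝ} : IntegrableOn (cdf μ) (Ioo l r) :=
  ((monotone_cdf μ).locallyIntegrable.integrableOn_isCompact isCompact_Icc)
    |>.mono_set Ioo_subset_Icc_self

variable [IsProbabilityMeasure μ]

lemma cdfOf_eq_cdf : cdfOf μ = cdf μ := by
  ext x
  rw [cdf_eq_real, measureReal_def, cdfOf]

lemma measure_Iio_eq_zero_of_isGLB {l : ℝ} (hl : IsGLB {x | 0 < cdf μ x} l) :
    μ (Iio l) = 0 := by
  have hlim : Tendsto (cdf μ) (𝓝[<] l) (𝓝 0) :=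
    tendsto_const_nhds.congr' (eventuallyEq_nhdsWithin_of_eqOn
      fun x hx => (cdf_eq_zero_of_isGLB hl hx).symm)
  rw [← measure_cdf μ, (cdf μ).measure_Iio (tendsto_cdf_atBot μ), leftLim_eq_of_tendsto hlim]
  simp

lemma measure_Ioi_eq_zero_of_isLUB {r : ℝ} (hr : IsLUB {x | cdf μ x < 1} r) :
    μ (Ioi r) = 0 := by
  have hlim : Tendsto (cdf μ) (𝓝[>] r) (𝓝 (cdf μ r)) :=
    ((cdf μ).right_continuous r).mono Ioi_subset_Ici_self
  have hr1 : cdf μ r = 1 := (cdf_le_one μ r).antisymm <| ge_of_tendsto hlim <|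
    eventually_nhdsWithin_of_forall fun x hx => (cdf_eq_one_of_isLUB hr hx).ge
  rw [← measure_cdf μ, (cdf μ).measure_Ioi (tendsto_cdf_atTop μ), hr1]
  simp

lemma integral_cdf_Ioo {l r : ℝ} (hlr : l ≤ r) (hμ : ∀ᵐ x ∂μ, x ∈ Icc l r) :
    ∫ x in Ioo l r, cdf μ x = r - ∫ x, x ∂μ := by
  have hint : Integrable (fun x => x) μ :=
    .of_bound (by fun_prop) (max |l| |r|) <| by
      filter_upwards [hμ] with x hx using abs_le_max_abs_abs hx.1 hx.2
  calc ∫ x in Ioo l r, cdf μ x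
      = ∫ t in 0..r - l, cdf μ (r - t) := by
        rw [intervalIntegral.integral_comp_sub_left, sub_sub_cancel, sub_zero,
          intervalIntegral.integral_of_le hlr, integral_Ioc_eq_integral_Ioo]
    _ = ∫ t in Ioc 0 (r - l), μ.real {x | t ≤ r - x} := by
        rw [intervalIntegral.integral_of_le (sub_nonneg.mpr hlr)]
        congr with t
        rw [cdf_eq_real]
        congr with x
        exact (le_sub_comm (a := t) (b := r) (c := x)).symm
    _ = ∫ x, (r - x) ∂μ := by
        refine (((integrable_const r).sub hint).integral_eq_integral_Ioc_meas_le ?_ ?_).symm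
        · filter_upwards [hμ] with x hx using sub_nonneg.mpr hx.2
        · filter_upwards [hμ] with x hx using sub_le_sub_left hx.1 (r : ℝ)
    _ = r - ∫ x, x ∂μ := by
        rw [integral_sub (integrable_const r) hint, integral_const]
        simp

lemma integral_one_sub_cdf_Ioo {l r : ℝ} (hlr : l ≤ r) (hμ : ∀ᵐ x ∂μ, x ∈ Icc l r) :
    ∫ x in Ioo l r, (1 - cdf μ x) = ∫ x, x ∂μ - l := by
  rw [integral_sub (integrable_const 1) integrableOn_cdf_Ioo, integral_cdf_Ioo hlr hμ,
    setIntegral_const, Real.volume_real_Ioo_of_le hlr, smul_eq_mul, mul_one]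
  ring

end ProbabilityTheory

/-- Hölder-type bound: for a random variable with bounded support `(l, r)`
and `θ ∈ (0,1)`, `G_X(θ, 1-θ) ≤ (r - E[X])^θ (E[X] - l)^(1-θ)`. -/
theorem stmt11 (μ : Measure ℝ) [IsProbabilityMeasure μ]
    (l r : ℝ) (hlr : l < r)
    (hl : IsGLB {x | 0 < cdfOf μ x} l) (hr : IsLUB {x | cdfOf μ x < 1} r)
    (θ : ℝ) (hθ : θ ∈ Ioo (0:ℝ) 1) :
    ∫ x in Ioo l r, cdfOf μ x ^ θ * (1 - cdfOf μ x) ^ (1 - θ) ≤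
      (r - ∫ x, x ∂μ) ^ θ * ((∫ x, x ∂μ) - l) ^ (1 - θ) := by
  rw [cdfOf_eq_cdf] at hl hr ⊢
  have hsupp : ∀ᵐ x ∂μ, x ∈ Icc l r := by
    filter_upwards [measure_eq_zero_iff_ae_notMem.mp (measure_Iio_eq_zero_of_isGLB hl),
      measure_eq_zero_iff_ae_notMem.mp (measure_Ioi_eq_zero_of_isLUB hr)] with x hxl hxr
    exact ⟨not_lt.mp hxl, not_lt.mp hxr⟩
  calc ∫ x in Ioo l r, cdf μ x ^ θ * (1 - cdf μ x) ^ (1 - θ)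
      ≤ (∫ x in Ioo l r, cdf μ x) ^ θ * (∫ x in Ioo l r, (1 - cdf μ x)) ^ (1 - θ) :=
        integral_rpow_mul_rpow_le (ae_of_all _ (cdf_nonneg μ))
          (ae_of_all _ fun x => sub_nonneg.mpr (cdf_le_one μ x)) integrableOn_cdf_Ioo
          ((integrable_const 1).sub integrableOn_cdf_Ioo) hθ.1.le (sub_nonneg.mpr hθ.2.le)
          (add_sub_cancel θ 1)
    _ = (r - ∫ x, x ∂μ) ^ θ * ((∫ x, x ∂μ) - l) ^ (1 - θ) := by
        rw [integral_cdf_Ioo hlr.le hsupp, integral_one_sub_cdf_Ioo hlr.le hsupp]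
end

section
/- Let X be a nondegenerate real random variable with continuous CDF F, let X' be an independent copy of X, and let T be an absolutely continuous random variable with CDF F_T having the same support as X. Then ∫ F(x)(1 − F(x)) dF_T(x) = (1/2) · E[F_T(max{X, X'}) − F_T(min{X, X'})]; i.e. the weighted q-distorted Gini function with both distortions equal to the identity equals half the expected F_T-spread of two independent copies of X. -/
open MeasureTheory ProbabilityTheory Set

lemma nullSingletonClass_of_continuous_cdfOf (μ : Measure ℝ) [IsProbabilityMeasure μ]
    (h : Continuous (cdfOf μ)) : NullSingletonClass μ where
  measure_singleton x := by
    rw [← measure_cdf μ, StieltjesFunction.measure_singleton, ← cdfOf_eq_cdf,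
      h.continuousAt.continuousWithinAt.leftLim_eq, sub_self, ENNReal.ofReal_zero]

lemma cdfOf_sub_cdfOf (ν : Measure ℝ) [IsFiniteMeasure ν] {a b : ℝ} (h : a ≤ b) :
    cdfOf ν b - cdfOf ν a = (ν (Ioc a b)).toReal := by
  rw [cdfOf, cdfOf, ← Iic_union_Ioc_eq_Iic h, measure_union (Iic_disjoint_Ioc le_rfl)
    measurableSet_Ioc, ENNReal.toReal_add (measure_ne_top _ _) (measure_ne_top _ _)]
  ring

lemma cdfOf_mul_one_sub_cdfOf (μ : Measure ℝ) [IsProbabilityMeasure μ] (x : ℝ) :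
    cdfOf μ x * (1 - cdfOf μ x) = (μ (Iic x) * μ (Ioi x)).toReal := by
  rw [ENNReal.toReal_mul, ← compl_Iic, ← measureReal_def, ← measureReal_def,
    measureReal_compl measurableSet_Iic, probReal_univ]
  rfl

lemma setOf_min_lt_and_le_max {Ω α : Type*} [LinearOrder α] (X Y : Ω → α) (x : α) :
    {ω | min (X ω) (Y ω) < x ∧ x ≤ max (X ω) (Y ω)} =
      (X ⁻¹' Iio x ∩ Y ⁻¹' Ici x) ∪ (Y ⁻¹' Iio x ∩ X ⁻¹' Ici x) := by
  ext ω
  simp only [mem_ofPred_eq, mem_union, mem_inter_iff, mem_preimage, mem_Iio, mem_Ici,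
    min_lt_iff, le_max_iff]
  grind

section

variable {Ω : Type*} [MeasurableSpace Ω]

lemma ProbabilityTheory.IndepFun.measure_min_lt_and_le_max {P : Measure Ω} {X Y : Ω → ℝ}
    (hX : Measurable X) (hY : Measurable Y) (hXY : IndepFun X Y P) (x : ℝ) :
    P {ω | min (X ω) (Y ω) < x ∧ x ≤ max (X ω) (Y ω)} =
      P.map X (Iio x) * P.map Y (Ici x) + P.map Y (Iio x) * P.map X (Ici x) := by
  have hdisj : Disjoint (X ⁻¹' Iio x ∩ Y ⁻¹' Ici x) (Y ⁻¹' Iio x ∩ X ⁻¹' Ici x) := by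
    rw [disjoint_left]
    rintro ω ⟨hXlt, -⟩ ⟨-, hXge⟩
    exact (mem_Ici.mp (mem_preimage.mp hXge)).not_gt hXlt
  rw [setOf_min_lt_and_le_max, measure_union hdisj ((hY measurableSet_Iio).inter
    (hX measurableSet_Ici)), hXY.measure_inter_preimage_eq_mul _ _ measurableSet_Iio
    measurableSet_Ici, hXY.symm.measure_inter_preimage_eq_mul _ _ measurableSet_Iio
    measurableSet_Ici, Measure.map_apply hX measurableSet_Iio,
    Measure.map_apply hX measurableSet_Ici, Measure.map_apply hY measurableSet_Iio,
    Measure.map_apply hY measurableSet_Ici]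

lemma ProbabilityTheory.IndepFun.measure_min_lt_and_le_max_of_map_eq {P : Measure Ω}
    {X Y : Ω → ℝ} (hX : Measurable X) (hY : Measurable Y) (hXY : IndepFun X Y P) {μ : Measure ℝ}
    [NullSingletonClass μ] (hμX : P.map X = μ) (hμY : P.map Y = μ) (x : ℝ) :
    P {ω | min (X ω) (Y ω) < x ∧ x ≤ max (X ω) (Y ω)} = 2 * (μ (Iic x) * μ (Ioi x)) := by
  rw [hXY.measure_min_lt_and_le_max hX hY, hμX, hμY, measure_congr Iio_ae_eq_Iic,
    ← measure_congr Ioi_ae_eq_Ici, two_mul]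

lemma measurableSet_setOf_lt_and_le {a b : Ω → ℝ} (ha : Measurable a) (hb : Measurable b) :
    MeasurableSet {p : Ω × ℝ | a p.1 < p.2 ∧ p.2 ≤ b p.1} :=
  (measurableSet_lt (ha.comp measurable_fst) measurable_snd).inter
    (measurableSet_le measurable_snd (hb.comp measurable_fst))

lemma lintegral_measure_Ioc_eq_lintegral_measure {P : Measure Ω} [SFinite P] {ν : Measure ℝ}
    [SFinite ν] {a b : Ω → ℝ} (ha : Measurable a) (hb : Measurable b) :
    ∫⁻ ω, ν (Ioc (a ω) (b ω)) ∂P = ∫⁻ x, P {ω | a ω < x ∧ x ≤ b ω} ∂ν := by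
  have hs := measurableSet_setOf_lt_and_le ha hb
  calc ∫⁻ ω, ν (Ioc (a ω) (b ω)) ∂P = P.prod ν {p | a p.1 < p.2 ∧ p.2 ≤ b p.1} :=
        (Measure.prod_apply hs).symm
    _ = ∫⁻ x, P {ω | a ω < x ∧ x ≤ b ω} ∂ν := Measure.prod_apply_symm hs

lemma integral_cdfOf_sub_cdfOf {P : Measure Ω} {ν : Measure ℝ} [IsFiniteMeasure ν]
    {a b : Ω → ℝ} (ha : Measurable a) (hb : Measurable b) (hab : ∀ ω, a ω ≤ b ω) :
    ∫ ω, (cdfOf ν (b ω) - cdfOf ν (a ω)) ∂P = (∫⁻ ω, ν (Ioc (a ω) (b ω)) ∂P).toReal := by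
  rw [← integral_toReal (f := fun ω => ν (Ioc (a ω) (b ω)))
    (measurable_measure_prodMk_left (measurableSet_setOf_lt_and_le ha hb)).aemeasurable
    (.of_forall fun _ => measure_lt_top _ _)]
  exact integral_congr_ae (.of_forall fun ω => cdfOf_sub_cdfOf ν (hab ω))

lemma integral_cdfOf_mul_one_sub_cdfOf (μ : Measure ℝ) [IsProbabilityMeasure μ] (ν : Measure ℝ) :
    ∫ x, cdfOf μ x * (1 - cdfOf μ x) ∂ν = (∫⁻ x, μ (Iic x) * μ (Ioi x) ∂ν).toReal := by
  have hIic : Measurable fun x => μ (Iic x) :=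
    Monotone.measurable fun _ _ h => measure_mono (Iic_subset_Iic.mpr h)
  have hIoi : Measurable fun x => μ (Ioi x) :=
    Antitone.measurable fun _ _ h => measure_mono (Ioi_subset_Ioi h)
  rw [← integral_toReal (f := fun x => μ (Iic x) * μ (Ioi x)) (hIic.mul hIoi).aemeasurable
    (.of_forall fun _ => ENNReal.mul_lt_top (measure_lt_top _ _) (measure_lt_top _ _))]
  exact integral_congr_ae (.of_forall (cdfOf_mul_one_sub_cdfOf μ))

end

theorem stmt19_general {Ω : Type*} [MeasurableSpace Ω] (P : Measure Ω) [IsProbabilityMeasure P]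
    (X X' : Ω → ℝ) (hX : Measurable X) (hX' : Measurable X')
    (hindep : IndepFun X X' P)
    (μ : Measure ℝ) (hidX : Measure.map X P = μ) (hidX' : Measure.map X' P = μ)
    (hFcont : Continuous (cdfOf μ))
    (ν : Measure ℝ) [IsProbabilityMeasure ν] :
    ∫ x, cdfOf μ x * (1 - cdfOf μ x) ∂ν =
      (1 / 2) *
        ∫ ω, (cdfOf ν (max (X ω) (X' ω)) - cdfOf ν (min (X ω) (X' ω))) ∂P := by
  have : IsProbabilityMeasure μ := hidX ▸ Measure.isProbabilityMeasure_map hX.aemeasurable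
  have : NullSingletonClass μ := nullSingletonClass_of_continuous_cdfOf μ hFcont
  rw [integral_cdfOf_sub_cdfOf (hX.min hX') (hX.max hX') fun _ => min_le_max,
    lintegral_measure_Ioc_eq_lintegral_measure (hX.min hX') (hX.max hX'),
    integral_cdfOf_mul_one_sub_cdfOf]
  simp_rw [hindep.measure_min_lt_and_le_max_of_map_eq hX hX' hidX hidX']
  rw [lintegral_const_mul' _ _ ENNReal.ofNat_ne_top, ENNReal.toReal_mul,
    ENNReal.toReal_ofNat]
  ring

/-- For a nondegenerate `X` with continuous CDF `F`, an independent copy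
`X'`, and an absolutely continuous `T` with CDF `F_T` having the same support as `X`,
`∫ F(x)(1 - F(x)) dF_T(x) = (1/2) E[F_T(max(X, X')) - F_T(min(X, X'))]`. -/
theorem stmt19 {Ω : Type*} [MeasurableSpace Ω] (P : Measure Ω) [IsProbabilityMeasure P]
    (X X' : Ω → ℝ) (hX : Measurable X) (hX' : Measurable X')
    (hindep : IndepFun X X' P)
    (μ : Measure ℝ) (hidX : Measure.map X P = μ) (hidX' : Measure.map X' P = μ)
    (hFcont : Continuous (cdfOf μ))
    (hnondeg : ∃ x : ℝ, 0 < cdfOf μ x ∧ cdfOf μ x < 1)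
    (fT : ℝ → ℝ) (hfT : ∀ x, 0 ≤ fT x)
    (ν : Measure ℝ) [IsProbabilityMeasure ν]
    (hν : ν = volume.withDensity fun x => ENNReal.ofReal (fT x))
    (hsupp : cigfSupport (cdfOf μ) = cigfSupport (cdfOf ν)) :
    ∫ x, cdfOf μ x * (1 - cdfOf μ x) ∂ν =
      (1 / 2) *
        ∫ ω, (cdfOf ν (max (X ω) (X' ω)) - cdfOf ν (min (X ω) (X' ω))) ∂P :=
  stmt19_general P X X' hX hX' hindep μ hidX hidX' hFcont ν
end
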